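/- arXiv:2002.08015 — 2 statements merged into one kernel-verified Lean document; each statement's English description precedes it below -/
import Mathlib

section
/- Let I ⊆ ℝ be a nonempty open interval and f : ℝ → ℝ a smooth function with f'(x) ≠ 0 for all x ∈ I. If the Schwarzian derivative of f vanishes identically on I, i.e. S(f)(x) = 0 for all x ∈ I, then f agrees on I with a Möbius transformation: there exist a, b, c, d ∈ ℝ with ad − bc ≠ 0 such that f(x) = (ax + b)/(cx + d) for all x ∈ I. -/
/-- The Schwarzian derivative of a real function:
`S(f)(x) = f'''(x)/f'(x) − (3/2)·(f''(x)/f'(x))²`. -/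
noncomputable def schwarzian (f : ℝ → ℝ) (x : ℝ) : ℝ :=
  iteratedDeriv 3 f x / deriv f x - (3 / 2) * (iteratedDeriv 2 f x / deriv f x) ^ 2


open Set

lemma const_of_hasDerivAt_zero {s : Set ℝ} (hs : Convex ℝ s) (ho : IsOpen s) {g : ℝ → ℝ}
    (h : ∀ x ∈ s, HasDerivAt g 0 x) {x y : ℝ} (hx : x ∈ s) (hy : y ∈ s) : g x = g y := by
  refine hs.is_const_of_fderivWithin_eq_zero
    (fun z hz => ((h z hz).differentiableAt).differentiableWithinAt) (fun z hz => ?_) hx hy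
  rw [fderivWithin_eq_fderiv (ho.uniqueDiffOn z hz) (h z hz).differentiableAt,
    (h z hz).hasFDerivAt.fderiv]
  ext
  simp

lemma aux_pos (p q : ℝ) (hpq : p < q) (f : ℝ → ℝ) (hf : ContDiff ℝ (⊤ : ℕ∞) f)
    (hf' : ∀ x ∈ Set.Ioo p q, 0 < deriv f x)
    (hS : ∀ x ∈ Set.Ioo p q, schwarzian f x = 0) :
    ∃ a b c d : ℝ, a * d - b * c ≠ 0 ∧
      ∀ x ∈ Set.Ioo p q, f x = (a * x + b) / (c * x + d) := by
  have hconv : Convex ℝ (Ioo p q) := convex_Ioo p q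
  have hopen : IsOpen (Ioo p q) := isOpen_Ioo
  have hfd : Differentiable ℝ f := hf.differentiable (by simp)
  have hD1 : Differentiable ℝ (deriv f) := by
    have := hf.differentiable_iteratedDeriv 1 (by exact_mod_cast lt_top_iff_ne_top.2 (by simp))
    rwa [iteratedDeriv_one] at this
  have hD2 : Differentiable ℝ (iteratedDeriv 2 f) :=
    hf.differentiable_iteratedDeriv 2 (WithTop.coe_lt_coe.2 (ENat.coe_lt_top 2))
  have hd2 : ∀ x, HasDerivAt (deriv f) (iteratedDeriv 2 f x) x := by
    intro x
    have h := (hD1 x).hasDerivAt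
    rwa [show deriv (deriv f) x = iteratedDeriv 2 f x by
      rw [iteratedDeriv_succ (n := 1), iteratedDeriv_one]] at h
  have hd3 : ∀ x, HasDerivAt (iteratedDeriv 2 f) (iteratedDeriv 3 f x) x := by
    intro x
    have h := (hD2 x).hasDerivAt
    rwa [show deriv (iteratedDeriv 2 f) x = iteratedDeriv 3 f x by
      rw [← iteratedDeriv_succ]] at h
  -- v = (f')^(-1/2)
  set v : ℝ → ℝ := fun x => (deriv f x) ^ (-(1/2) : ℝ) with hv_def
  set G : ℝ → ℝ := fun x => (-(1/2)) * (deriv f x) ^ (-(3/2) : ℝ) * iteratedDeriv 2 f x with hG_def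
  have hv : ∀ x ∈ Ioo p q, HasDerivAt v (G x) x := by
    intro x hx
    have h := (hd2 x).rpow_const (p := -(1/2)) (Or.inl (hf' x hx).ne')
    rw [show -(1/2) - 1 = (-(3/2) : ℝ) by norm_num] at h
    convert h using 1
    ring
  have hG0 : ∀ x ∈ Ioo p q, HasDerivAt G 0 x := by
    intro x hx
    have hpos := hf' x hx
    have hd3' : iteratedDeriv 3 f x = 3 / 2 * (iteratedDeriv 2 f x) ^ 2 / deriv f x := by
      have h := hS x hx
      unfold schwarzian at h
      field_simp at h
      have key : (iteratedDeriv 3 f x * (2 * deriv f x) - 3 * iteratedDeriv 2 f x ^ 2) *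
          deriv f x = 0 := by linear_combination (deriv f x) * h
      rcases mul_eq_zero.1 key with h' | h'
      · field_simp
        linarith
      · exact absurd h' hpos.ne'
    have h1 : HasDerivAt (fun y => (deriv f y) ^ (-(3/2) : ℝ))
        ((-(3/2)) * (deriv f x) ^ (-(5/2) : ℝ) * iteratedDeriv 2 f x) x := by
      have h := (hd2 x).rpow_const (p := -(3/2)) (Or.inl hpos.ne')
      rw [show -(3/2) - 1 = (-(5/2) : ℝ) by norm_num] at h
      convert h using 1
      ring
    have h2 := ((h1.mul (hd3 x)).const_mul (-(1/2) : ℝ))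
    have hfun : G = fun y => (-(1/2) : ℝ) *
        ((deriv f y) ^ (-(3/2) : ℝ) * iteratedDeriv 2 f y) := by
      funext y
      simp only [hG_def]
      ring
    rw [hfun]
    refine h2.congr_deriv (Eq.symm ?_)
    rw [hd3', show (-(5/2) : ℝ) = -(3/2) + (-1) by norm_num,
      Real.rpow_add hpos, Real.rpow_neg_one]
    field_simp
    ring
  -- deriv v = G on the interval, and deriv v is constant
  have hdvz : ∀ x ∈ Ioo p q, HasDerivAt (deriv v) 0 x := by
    intro x hx
    refine (hG0 x hx).congr_of_eventuallyEq ?_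
    filter_upwards [hopen.mem_nhds hx] with y hy
    exact (hv y hy).deriv
  obtain ⟨x₀, hx₀⟩ : ∃ x₀, x₀ ∈ Ioo p q := ⟨(p + q) / 2, by constructor <;> linarith⟩
  set c : ℝ := deriv v x₀ with hc_def
  have hvc : ∀ x ∈ Ioo p q, G x = c := by
    intro x hx
    rw [← (hv x hx).deriv]
    exact const_of_hasDerivAt_zero hconv hopen hdvz hx hx₀
  -- v x - c * x is constant
  have hL : ∀ x ∈ Ioo p q, HasDerivAt (fun y => v y - c * y) 0 x := by
    intro x hx
    have := (hv x hx).sub ((hasDerivAt_id x).const_mul c)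
    rw [hvc x hx] at this
    exact this.congr_deriv (by simp)
  set d : ℝ := v x₀ - c * x₀ with hd_def
  have hvx : ∀ x ∈ Ioo p q, v x = c * x + d := by
    intro x hx
    have := const_of_hasDerivAt_zero hconv hopen hL hx hx₀
    rw [hd_def]; linarith [this]
  have hvpos : ∀ x ∈ Ioo p q, 0 < v x := fun x hx => Real.rpow_pos_of_pos (hf' x hx) _
  have hne : ∀ x ∈ Ioo p q, c * x + d ≠ 0 := fun x hx => by
    rw [← hvx x hx]; exact (hvpos x hx).ne'
  -- f' x = 1/(c x + d)^2
  have hf'eq : ∀ x ∈ Ioo p q, deriv f x = ((c * x + d) ^ 2)⁻¹ := by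
    intro x hx
    have hpos := hf' x hx
    have hv2 : (deriv f x ^ (-(1/2) : ℝ)) ^ (2 : ℕ) = (deriv f x)⁻¹ := by
      rw [← Real.rpow_natCast (deriv f x ^ (-(1/2) : ℝ)) 2,
        ← Real.rpow_mul hpos.le]
      rw [show (-(1/2) : ℝ) * ((2 : ℕ) : ℝ) = -1 by norm_num, Real.rpow_neg_one]
    have hvx2 : v x ^ (2 : ℕ) = (deriv f x)⁻¹ := hv2
    rw [hvx x hx] at hvx2
    rw [hvx2, inv_inv]
  -- Integrate f' = 1/(c x + d)^2
  by_cases hc : c = 0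
  · -- v is the constant d, f' = 1/d², f is affine
    have hd0 : d ≠ 0 := by
      have := hne x₀ hx₀
      rwa [hc, zero_mul, zero_add] at this
    set F : ℝ → ℝ := fun y => (d ^ 2)⁻¹ * y with hF_def
    have hFd : ∀ x ∈ Ioo p q, HasDerivAt (fun y => f y - F y) 0 x := by
      intro x hx
      have h1 : HasDerivAt F ((d ^ 2)⁻¹) x := by
        simpa using (hasDerivAt_id x).const_mul ((d ^ 2)⁻¹)
      have h2 := ((hfd x).hasDerivAt).sub h1
      rw [hf'eq x hx, hc, zero_mul, zero_add, sub_self] at h2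
      exact h2
    set k : ℝ := f x₀ - F x₀ with hk_def
    refine ⟨(d ^ 2)⁻¹, k, 0, 1, by simp [hd0], fun x hx => ?_⟩
    have := const_of_hasDerivAt_zero hconv hopen hFd hx hx₀
    have hfx : f x = (d ^ 2)⁻¹ * x + k := by
      simp only [hF_def] at this
      rw [hk_def, hF_def]
      linarith
    rw [hfx]
    simp
  · -- general Möbius case
    set F : ℝ → ℝ := fun y => -(c⁻¹) * (c * y + d)⁻¹ with hF_def
    have hFd : ∀ x ∈ Ioo p q, HasDerivAt (fun y => f y - F y) 0 x := by
      intro x hx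
      have h0 : HasDerivAt (fun y => c * y + d) c x := by
        simpa using ((hasDerivAt_id x).const_mul c).add_const d
      have h1 : HasDerivAt (fun y => (c * y + d)⁻¹) (-c / (c * x + d) ^ 2) x :=
        h0.inv (hne x hx)
      have h2 : HasDerivAt F (((c * x + d) ^ 2)⁻¹) x := by
        have := h1.const_mul (-(c⁻¹))
        refine this.congr_deriv (Eq.symm ?_)
        field_simp
      have h3 := ((hfd x).hasDerivAt).sub h2
      rw [hf'eq x hx, sub_self] at h3
      exact h3
    set k : ℝ := f x₀ - F x₀ with hk_def
    refine ⟨k * c, k * d - c⁻¹, c, d, ?_, fun x hx => ?_⟩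
    · have : k * c * d - (k * d - c⁻¹) * c = 1 := by field_simp; ring
      rw [this]
      norm_num
    · have := const_of_hasDerivAt_zero hconv hopen hFd hx hx₀
      have hfx : f x = -(c⁻¹) * (c * x + d)⁻¹ + k := by
        simp only [hF_def] at this
        rw [hk_def, hF_def]
        linarith
      rw [hfx]
      field_simp [hne x hx]
      ring

/-- If a smooth function with nonvanishing derivative on a nonempty open interval has
identically vanishing Schwarzian derivative there, then it coincides on that interval
with a Möbius transformation. -/
theorem mobius_of_schwarzian_eq_zero (p q : ℝ) (hpq : p < q) (f : ℝ → ℝ)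
    (hf : ContDiff ℝ (⊤ : ℕ∞) f) (hf' : ∀ x ∈ Set.Ioo p q, deriv f x ≠ 0)
    (hS : ∀ x ∈ Set.Ioo p q, schwarzian f x = 0) :
    ∃ a b c d : ℝ, a * d - b * c ≠ 0 ∧
      ∀ x ∈ Set.Ioo p q, f x = (a * x + b) / (c * x + d) := by
  have hD1 : Differentiable ℝ (deriv f) := by
    have := hf.differentiable_iteratedDeriv 1 (by exact_mod_cast lt_top_iff_ne_top.2 (by simp))
    rwa [iteratedDeriv_one] at this
  by_cases hpos : ∀ x ∈ Set.Ioo p q, 0 < deriv f x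
  · exact aux_pos p q hpq f hf hpos hS
  · push_neg at hpos
    obtain ⟨y, hy, hy0⟩ := hpos
    have hylt : deriv f y < 0 := lt_of_le_of_ne hy0 (hf' y hy)
    have hneg : ∀ x ∈ Set.Ioo p q, deriv f x < 0 := by
      intro z hz
      by_contra h
      push_neg at h
      have hzpos : 0 < deriv f z := lt_of_le_of_ne h (Ne.symm (hf' z hz))
      rcases le_total y z with hyz | hzy
      · have hsub : Icc y z ⊆ Ioo p q := Icc_subset_Ioo hy.1 hz.2
        have := intermediate_value_Icc hyz (hD1.continuous.continuousOn)
        obtain ⟨w, hw, hw0⟩ := this ⟨hylt.le, hzpos.le⟩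
        exact hf' w (hsub hw) hw0
      · have hsub : Icc z y ⊆ Ioo p q := Icc_subset_Ioo hz.1 hy.2
        have := intermediate_value_Icc' hzy (hD1.continuous.continuousOn)
        obtain ⟨w, hw, hw0⟩ := this ⟨hylt.le, hzpos.le⟩
        exact hf' w (hsub hw) hw0
    -- apply the positive case to -f
    have hfn : ContDiff ℝ (⊤ : ℕ∞) (fun x => -f x) := hf.neg
    have hdn : ∀ x, deriv (fun y => -f y) x = -deriv f x := fun x => deriv.neg
    have hSn : ∀ x ∈ Set.Ioo p q, schwarzian (fun y => -f y) x = 0 := by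
      intro x hx
      have h := hS x hx
      unfold schwarzian at h ⊢
      rw [hdn, iteratedDeriv_fun_neg, iteratedDeriv_fun_neg, neg_div_neg_eq, neg_div_neg_eq]
      exact h
    have hpn : ∀ x ∈ Set.Ioo p q, 0 < deriv (fun y => -f y) x := by
      intro x hx
      rw [hdn]
      linarith [hneg x hx]
    obtain ⟨a, b, c, d, hdet, heq⟩ := aux_pos p q hpq (fun x => -f x) hfn hpn hSn
    refine ⟨-a, -b, c, d, ?_, fun x hx => ?_⟩
    · intro h
      apply hdet
      linarith
    · have := heq x hx
      have : f x = -((a * x + b) / (c * x + d)) := by linarith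
      rw [this, ← neg_div]
      ring_nf
end

section
/- Let I ⊆ ℝ be a nonempty open interval and f, g : ℝ → ℝ smooth functions with f'(x) ≠ 0 and g'(x) ≠ 0 for all x ∈ I. If the Schwarzian derivatives of f and g agree on I, i.e. S(f)(x) = S(g)(x) for all x ∈ I, then f is obtained from g by postcomposition with a Möbius transformation: there exist a, b, c, d ∈ ℝ with ad − bc ≠ 0 such that for all x ∈ I one has c·g(x) + d ≠ 0 and f(x) = (a·g(x) + b)/(c·g(x) + d). -/
open Set

private lemma const_of_deriv_zero' {F : ℝ → ℝ} {s : Set ℝ} (hs : Convex ℝ s) (ho : IsOpen s)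
    (h : ∀ t ∈ s, HasDerivAt F 0 t) {x y : ℝ} (hx : x ∈ s) (hy : y ∈ s) : F x = F y := by
  apply hs.is_const_of_fderivWithin_eq_zero
    (fun t ht => (h t ht).differentiableAt.differentiableWithinAt) _ hx hy
  intro t ht
  rw [fderivWithin_of_isOpen ho ht, (h t ht).hasFDerivAt.fderiv]
  ext
  simp

private lemma lip_mul' {M : ℝ} (hM : 0 ≤ M) {N : ℝ} (hN : |N| ≤ M) :
    LipschitzWith M.toNNReal (fun z : ℝ => N * z) := by
  apply LipschitzWith.of_dist_le_mul
  intro x y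
  rw [Real.dist_eq, Real.dist_eq, ← mul_sub, abs_mul, Real.coe_toNNReal M hM]
  exact mul_le_mul_of_nonneg_right hN (abs_nonneg _)

set_option maxHeartbeats 1000000
/-- If two smooth functions with nonvanishing derivatives on a nonempty open interval
have the same Schwarzian derivative there, then one is obtained from the other by
postcomposition with a Möbius transformation. -/
theorem eq_mobius_comp_of_schwarzian_eq (p q : ℝ) (hpq : p < q) (f g : ℝ → ℝ)
    (hf : ContDiff ℝ (⊤ : ℕ∞) f) (hg : ContDiff ℝ (⊤ : ℕ∞) g)
    (hf' : ∀ x ∈ Set.Ioo p q, deriv f x ≠ 0)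
    (hg' : ∀ x ∈ Set.Ioo p q, deriv g x ≠ 0)
    (hS : ∀ x ∈ Set.Ioo p q, schwarzian f x = schwarzian g x) :
    ∃ a b c d : ℝ, a * d - b * c ≠ 0 ∧
      ∀ x ∈ Set.Ioo p q, c * g x + d ≠ 0 ∧ f x = (a * g x + b) / (c * g x + d) := by
  -- Notation for derivatives
  set f1 := deriv f with hf1def
  set f2 := deriv f1 with hf2def
  set f3 := deriv f2 with hf3def
  set g1 := deriv g with hg1def
  set g2 := deriv g1 with hg2def
  set g3 := deriv g2 with hg3def
  have hfi : ContDiff ℝ ((⊤ : ℕ∞) : WithTop ℕ∞) f := hf.of_le (by simp)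
  have hgi : ContDiff ℝ ((⊤ : ℕ∞) : WithTop ℕ∞) g := hg.of_le (by simp)
  have sf1 : ContDiff ℝ ((⊤ : ℕ∞) : WithTop ℕ∞) f1 := (contDiff_infty_iff_deriv.mp hfi).2
  have sf2 : ContDiff ℝ ((⊤ : ℕ∞) : WithTop ℕ∞) f2 := (contDiff_infty_iff_deriv.mp sf1).2
  have sg1 : ContDiff ℝ ((⊤ : ℕ∞) : WithTop ℕ∞) g1 := (contDiff_infty_iff_deriv.mp hgi).2
  have sg2 : ContDiff ℝ ((⊤ : ℕ∞) : WithTop ℕ∞) g2 := (contDiff_infty_iff_deriv.mp sg1).2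
  -- pointwise derivative statements
  have Hf : ∀ y, HasDerivAt f (f1 y) y := fun y => ((hfi.differentiable (by norm_num)) y).hasDerivAt
  have Hf1 : ∀ y, HasDerivAt f1 (f2 y) y := fun y => ((sf1.differentiable (by norm_num)) y).hasDerivAt
  have Hf2 : ∀ y, HasDerivAt f2 (f3 y) y := fun y => ((sf2.differentiable (by norm_num)) y).hasDerivAt
  have Hg : ∀ y, HasDerivAt g (g1 y) y := fun y => ((hgi.differentiable (by norm_num)) y).hasDerivAt
  have Hg1 : ∀ y, HasDerivAt g1 (g2 y) y := fun y => ((sg1.differentiable (by norm_num)) y).hasDerivAt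
  have Hg2 : ∀ y, HasDerivAt g2 (g3 y) y := fun y => ((sg2.differentiable (by norm_num)) y).hasDerivAt
  -- rewrite the Schwarzian hypothesis
  have hS' : ∀ x ∈ Set.Ioo p q,
      f3 x / f1 x - 3 / 2 * (f2 x / f1 x) ^ 2 = g3 x / g1 x - 3 / 2 * (g2 x / g1 x) ^ 2 := by
    intro x hx
    have h := hS x hx
    simpa [schwarzian, iteratedDeriv_succ, iteratedDeriv_zero, ← hf1def, ← hf2def, ← hf3def,
      ← hg1def, ← hg2def, ← hg3def] using h
  clear_value f1 f2 f3 g1 g2 g3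
  -- base point
  set x₀ : ℝ := (p + q) / 2 with hx₀def
  have hx₀ : x₀ ∈ Set.Ioo p q := ⟨by rw [hx₀def]; linarith, by rw [hx₀def]; linarith⟩
  have hf10 : f1 x₀ ≠ 0 := hf' x₀ hx₀
  have hg10 : g1 x₀ ≠ 0 := hg' x₀ hx₀
  -- the Möbius coefficients
  set c : ℝ := (f1 x₀ * g2 x₀ - f2 x₀ * g1 x₀) / (2 * f1 x₀ * g1 x₀ ^ 2) with hcdef
  set a : ℝ := f1 x₀ / g1 x₀ + f x₀ * c with hadef
  set d : ℝ := 1 - c * g x₀ with hddef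
  set b : ℝ := f x₀ - a * g x₀ with hbdef
  have hdet : a * d - b * c ≠ 0 := by
    have h : a * d - b * c = f1 x₀ / g1 x₀ := by rw [hddef, hbdef, hadef]; ring
    rw [h]
    exact div_ne_zero hf10 hg10
  clear_value x₀
  -- the key auxiliary functions
  set φ : ℝ → ℝ := fun y => f y * (c * g y + d) - (a * g y + b) with hφdef
  set φ1 : ℝ → ℝ := fun y => f1 y * (c * g y + d) + f y * (c * g1 y) - a * g1 y with hφ1def
  set φ2 : ℝ → ℝ := fun y =>
    f2 y * (c * g y + d) + 2 * (c * g1 y) * f1 y + f y * (c * g2 y) - a * g2 y with hφ2def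
  have He : ∀ y, HasDerivAt (fun z => c * g z + d) (c * g1 y) y := fun y =>
    ((Hg y).const_mul c).add_const d
  have Hφ : ∀ y, HasDerivAt φ (φ1 y) y := by
    intro y
    have h := ((Hf y).mul (He y)).sub (((Hg y).const_mul a).add_const b)
    exact h.congr_deriv (by simp only [hφ1def]; try ring)
  have Hφ1 : ∀ y, HasDerivAt φ1 (φ2 y) y := by
    intro y
    have h := (((Hf1 y).mul (He y)).add ((Hf y).mul ((Hg1 y).const_mul c))).sub
      ((Hg1 y).const_mul a)
    exact h.congr_deriv (by simp only [hφ2def]; try ring)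
  -- poles cannot occur where φ vanishes
  have hpole : ∀ y, φ y = 0 → c * g y + d ≠ 0 := by
    intro y h0 hE
    simp only [hφdef] at h0
    apply hdet
    have h1 : a * g y + b = 0 := by linear_combination -h0 + f y * hE
    linear_combination (-c) * h1 + a * hE
  -- the base point lies in the zero set
  have he0 : c * g x₀ + d = 1 := by rw [hddef]; ring
  have hφx₀ : φ x₀ = 0 := by simp only [hφdef, he0, hbdef]; ring
  have hφ1x₀ : φ1 x₀ = 0 := by
    simp only [hφ1def, he0, hadef]
    field_simp
    ring
  have hφ2x₀ : φ2 x₀ = 0 := by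
    simp only [hφ2def]; rw [he0, hadef, hcdef]
    field_simp
    ring
  clear hcdef hadef hddef hbdef
  clear_value c a d b
  -- the (relatively clopen) zero set
  set Z : Set ℝ := {y | y ∈ Set.Ioo p q ∧ φ y = 0 ∧ φ1 y = 0 ∧ φ2 y = 0} with hZdef
  -- Openness: the main analytic step
  have hopen : ∀ x ∈ Z, ∃ ε > 0, Metric.ball x ε ⊆ Z := by
    intro x hx
    obtain ⟨hxI, hφx, hφ1x, hφ2x⟩ := hx
    have hf1x : f1 x ≠ 0 := hf' x hxI
    have hg1x : g1 x ≠ 0 := hg' x hxI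
    have hex : c * g x + d ≠ 0 := hpole x hφx
    -- the two solutions of the Riccati equation
    set u : ℝ → ℝ := fun y => f2 y / f1 y with hudef
    set w : ℝ → ℝ := fun y => g2 y / g1 y - 2 * c * g1 y / (c * g y + d) with hwdef
    set m : ℝ → ℝ := fun y => (u y + w y) / 2 with hmdef
    set M : ℝ := |m x| + 1 with hMdef
    have hM0 : 0 ≤ M := by positivity
    set N : ℝ → ℝ := fun y => max (-M) (min M (m y)) with hNdef
    have hNM : ∀ t, |N t| ≤ M := by
      intro t
      rw [abs_le]
      refine ⟨le_max_left _ _, max_le (by linarith) (min_le_left _ _)⟩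
    -- continuity of m at x
    have hmc : ContinuousAt m x := by
      simp only [hmdef, hudef, hwdef]
      apply ContinuousAt.div_const
      apply ContinuousAt.add
      · exact (sf2.continuous.continuousAt).div (sf1.continuous.continuousAt) hf1x
      · apply ContinuousAt.sub
        · exact (sg2.continuous.continuousAt).div (sg1.continuous.continuousAt) hg1x
        · exact ((sg1.continuous.continuousAt).const_mul _).div
            (((hgi.continuous.continuousAt).const_mul c).add continuousAt_const) hex
    -- choose the small ball
    have hnh : ∀ᶠ y in nhds x, y ∈ Set.Ioo p q ∧ c * g y + d ≠ 0 ∧ |m y - m x| < 1 := by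
      have h1 : ∀ᶠ y in nhds x, y ∈ Set.Ioo p q := isOpen_Ioo.eventually_mem hxI
      have h2 : ∀ᶠ y in nhds x, c * g y + d ≠ 0 := by
        have hec : ContinuousAt (fun y => c * g y + d) x :=
          ((hgi.continuous.continuousAt).const_mul c).add continuousAt_const
        exact hec.eventually_ne hex
      have h3 : ∀ᶠ y in nhds x, |m y - m x| < 1 := by
        have h4 := hmc (Metric.ball_mem_nhds (m x) one_pos)
        filter_upwards [h4] with y hy
        simpa [Real.dist_eq] using hy
      filter_upwards [h1, h2, h3] with y hy1 hy2 hy3 using ⟨hy1, hy2, hy3⟩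
    obtain ⟨ε, hε, hball⟩ := Metric.eventually_nhds_iff_ball.mp hnh
    refine ⟨ε, hε, ?_⟩
    have hxJ : x ∈ Metric.ball x ε := Metric.mem_ball_self hε
    have hJfact : ∀ t ∈ Metric.ball x ε, t ∈ Set.Ioo p q ∧ c * g t + d ≠ 0 ∧ |m t - m x| < 1 :=
      fun t ht => hball t ht
    -- derivative of u
    have hut : ∀ t ∈ Metric.ball x ε, HasDerivAt u
        ((f3 t / f1 t - 3 / 2 * (f2 t / f1 t) ^ 2) + (u t) ^ 2 / 2) t := by
      intro t ht
      have hf1t : f1 t ≠ 0 := hf' t (hJfact t ht).1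
      have h := (Hf2 t).div (Hf1 t) hf1t
      exact h.congr_deriv (by simp only [hudef]; field_simp; ring)
    -- derivative of w
    have hwt : ∀ t ∈ Metric.ball x ε, HasDerivAt w
        ((g3 t / g1 t - 3 / 2 * (g2 t / g1 t) ^ 2) + (w t) ^ 2 / 2) t := by
      intro t ht
      have hg1t : g1 t ≠ 0 := hg' t (hJfact t ht).1
      have het : c * g t + d ≠ 0 := (hJfact t ht).2.1
      have h := ((Hg2 t).div (Hg1 t) hg1t).sub (((Hg1 t).const_mul (2 * c)).div (He t) het)
      exact h.congr_deriv (by simp only [hwdef]; field_simp; ring)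
    -- the difference u - w satisfies a linear ODE with clamped coefficient
    have hδt : ∀ t ∈ Metric.ball x ε, HasDerivAt (fun y => u y - w y) (N t * (u t - w t)) t := by
      intro t ht
      have h := (hut t ht).sub (hwt t ht)
      have hSeq := hS' t (hJfact t ht).1
      have hNt : N t = m t := by
        have h1 : |m t| ≤ M := by
          calc |m t| = |(m t - m x) + m x| := by ring_nf
          _ ≤ |m t - m x| + |m x| := abs_add_le _ _
          _ ≤ M := by rw [hMdef]; linarith [(hJfact t ht).2.2]
        rw [abs_le] at h1
        simp only [hNdef]
        rw [min_eq_right h1.2, max_eq_right h1.1]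
      refine h.congr_deriv ?_
      rw [hSeq, hNt]
      simp only [hmdef]
      ring
    -- initial condition : u x = w x
    have hinit : u x - w x = 0 := by
      simp only [hφ1def] at hφ1x
      simp only [hφ2def] at hφ2x
      have h1 : f1 x * (c * g x + d) = (a - c * f x) * g1 x := by linear_combination hφ1x
      have h2 : f2 x * (c * g x + d) = (a - c * f x) * g2 x - 2 * c * f1 x * g1 x := by
        linear_combination hφ2x
      simp only [hudef, hwdef]
      rw [sub_eq_zero]
      field_simp
      linear_combination g1 x * h2 - g2 x * h1
    -- ODE uniqueness: u = w on the ball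
    have huw : ∀ t ∈ Metric.ball x ε, u t = w t := by
      have hball' : Metric.ball x ε = Set.Ioo (x - ε) (x + ε) := Real.ball_eq_Ioo x ε
      have hx' : x ∈ Set.Ioo (x - ε) (x + ε) := by rw [← hball']; exact hxJ
      have main := ODE_solution_unique_of_mem_Ioo
        (v := fun t z => N t * z) (s := fun _ => Set.univ) (K := M.toNNReal)
        (fun t _ => (lip_mul' hM0 (hNM t)).lipschitzOnWith)
        hx'
        (f := fun y => u y - w y) (g := fun _ => (0 : ℝ))
        (fun t ht => ⟨by rw [← hball'] at ht; exact hδt t ht, trivial⟩)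
        (fun t ht => ⟨by simpa using hasDerivAt_const t (0 : ℝ), trivial⟩)
        (by simpa using hinit)
      intro t ht
      rw [hball'] at ht
      have h := main ht
      simpa [sub_eq_zero] using h
    -- from u = w deduce that r := f1 * (c g + d)^2 / g1 is constant on the ball
    set r : ℝ → ℝ := fun y => f1 y * (c * g y + d) ^ 2 / g1 y with hrdef
    have hr0 : ∀ t ∈ Metric.ball x ε, HasDerivAt r 0 t := by
      intro t ht
      have hf1t : f1 t ≠ 0 := hf' t (hJfact t ht).1
      have hg1t : g1 t ≠ 0 := hg' t (hJfact t ht).1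
      have het : c * g t + d ≠ 0 := (hJfact t ht).2.1
      have hnum : HasDerivAt (fun y => f1 y * (c * g y + d) ^ 2)
          (f2 t * (c * g t + d) ^ 2 + f1 t * (2 * (c * g t + d) ^ 1 * (c * g1 t))) t :=
        (Hf1 t).mul ((He t).pow 2)
      have h := hnum.div (Hg1 t) hg1t
      refine h.congr_deriv ?_
      have hq := huw t ht
      simp only [hudef, hwdef] at hq
      field_simp at hq
      rw [div_eq_zero_iff]
      left
      linear_combination (c * g t + d) * hq
    have hrconst : ∀ t ∈ Metric.ball x ε, r t = r x := fun t ht =>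
      const_of_deriv_zero' (convex_ball x ε) Metric.isOpen_ball hr0 ht hxJ
    have hrx : r x = a * d - b * c := by
      simp only [hrdef]
      simp only [hφ1def] at hφ1x
      simp only [hφdef] at hφx
      rw [div_eq_iff hg1x]
      linear_combination (c * g x + d) * hφ1x - (c * g1 x) * hφx
    -- now show φ vanishes identically on the ball
    have hψ : ∀ t ∈ Metric.ball x ε, φ t = 0 := by
      have hψder : ∀ t ∈ Metric.ball x ε,
          HasDerivAt (fun y => f y - (a * g y + b) / (c * g y + d)) 0 t := by
        intro t ht
        have hg1t : g1 t ≠ 0 := hg' t (hJfact t ht).1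
        have het : c * g t + d ≠ 0 := (hJfact t ht).2.1
        have hnum : HasDerivAt (fun y => a * g y + b) (a * g1 t) t :=
          ((Hg t).const_mul a).add_const b
        have h := (Hf t).sub (hnum.div (He t) het)
        refine h.congr_deriv ?_
        have hrt : r t = a * d - b * c := (hrconst t ht).trans hrx
        simp only [hrdef] at hrt
        rw [div_eq_iff hg1t] at hrt
        rw [sub_eq_zero, eq_comm, div_eq_iff (by positivity : (c * g t + d) ^ 2 ≠ 0)]
        linear_combination -hrt
      have hψx : f x - (a * g x + b) / (c * g x + d) = 0 := by
        simp only [hφdef] at hφx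
        rw [sub_eq_zero, eq_div_iff hex]
        linear_combination hφx
      intro t ht
      have h := const_of_deriv_zero' (convex_ball x ε) Metric.isOpen_ball hψder ht hxJ
      rw [hψx] at h
      have het : c * g t + d ≠ 0 := (hJfact t ht).2.1
      have hft : f t = (a * g t + b) / (c * g t + d) := eq_of_sub_eq_zero h
      simp only [hφdef, hft]
      rw [div_mul_cancel₀ _ het, sub_self]
    -- φ, φ1, φ2 all vanish on the ball
    have hφ1ball : ∀ t ∈ Metric.ball x ε, φ1 t = 0 := by
      intro t ht
      have hev : φ =ᶠ[nhds t] (fun _ => (0 : ℝ)) := by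
        filter_upwards [Metric.isOpen_ball.eventually_mem ht] with z hz using hψ z hz
      have h := hev.deriv_eq
      rw [deriv_const] at h
      rw [← (Hφ t).deriv]
      exact h
    have hφ2ball : ∀ t ∈ Metric.ball x ε, φ2 t = 0 := by
      intro t ht
      have hev : φ1 =ᶠ[nhds t] (fun _ => (0 : ℝ)) := by
        filter_upwards [Metric.isOpen_ball.eventually_mem ht] with z hz using hφ1ball z hz
      have h := hev.deriv_eq
      rw [deriv_const] at h
      rw [← (Hφ1 t).deriv]
      exact h
    exact fun z hz => ⟨(hJfact z hz).1, hψ z hz, hφ1ball z hz, hφ2ball z hz⟩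
  -- Z is open
  have hZopen : IsOpen Z := by
    rw [Metric.isOpen_iff]
    exact hopen
  -- Z is relatively closed in the interval
  have hφcont : Continuous φ :=
    continuous_iff_continuousAt.mpr fun y => (Hφ y).differentiableAt.continuousAt
  have hφ1cont : Continuous φ1 :=
    continuous_iff_continuousAt.mpr fun y => (Hφ1 y).differentiableAt.continuousAt
  have hφ2cont : Continuous φ2 := by
    rw [hφ2def]
    apply Continuous.sub
    · apply Continuous.add
      · apply Continuous.add
        · exact sf2.continuous.mul ((continuous_const.mul hgi.continuous).add continuous_const)
        · exact (continuous_const.mul (continuous_const.mul sg1.continuous)).mul sf1.continuous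
      · exact hfi.continuous.mul (continuous_const.mul sg2.continuous)
    · exact continuous_const.mul sg2.continuous
  have hFclosed : IsClosed {y : ℝ | φ y = 0 ∧ φ1 y = 0 ∧ φ2 y = 0} := by
    apply IsClosed.inter (isClosed_eq hφcont continuous_const)
    exact IsClosed.inter (isClosed_eq hφ1cont continuous_const)
      (isClosed_eq hφ2cont continuous_const)
  have hclos : closure Z ∩ Set.Ioo p q ⊆ Z := by
    intro y hy
    have hZF : Z ⊆ {y : ℝ | φ y = 0 ∧ φ1 y = 0 ∧ φ2 y = 0} := fun z hz =>
      ⟨hz.2.1, hz.2.2.1, hz.2.2.2⟩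
    have hmem := closure_minimal hZF hFclosed hy.1
    exact ⟨hy.2, hmem.1, hmem.2.1, hmem.2.2⟩
  have hsub : Set.Ioo p q ⊆ Z :=
    isPreconnected_Ioo.subset_of_closure_inter_subset hZopen
      ⟨x₀, hx₀, ⟨hx₀, hφx₀, hφ1x₀, hφ2x₀⟩⟩
      (fun y hy => hclos ⟨hy.1, hy.2⟩)
  -- conclusion
  refine ⟨a, b, c, d, hdet, ?_⟩
  intro x hx
  obtain ⟨-, hφx, -, -⟩ := hsub hx
  have hex : c * g x + d ≠ 0 := hpole x hφx
  refine ⟨hex, ?_⟩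
  rw [eq_div_iff hex]
  simp only [hφdef] at hφx
  linear_combination hφx
end
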